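/- If there exists a Banach space Y such that every uniformly p-convergent subset of K(X,Y) is equicompact, then C_p(X,Y) = K(X,Y). -/

import Mathlib

open Filter Topology Metric Bornology ENNReal

noncomputable section

universe u v w

variable {X : Type*} {Y : Type*} {Z : Type*}

section Defs
variable [NormedAddCommGroup X] [NormedSpace ℝ X]
variable [NormedAddCommGroup Y] [NormedSpace ℝ Y]

/-- A sequence is weakly `p`-summable if `(x*(xₙ))ₙ ∈ ℓ_p` for every functional `x*`;
for `p = ∞` we use weakly null sequences. -/
def WeaklyPSummable (p : ℝ≥0∞) (x : ℕ → X) : Prop :=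
  if p = ⊤ then ∀ f : X →L[ℝ] ℝ, Tendsto (fun n => f (x n)) atTop (𝓝 0)
  else ∀ f : X →L[ℝ] ℝ, Memℓp (fun n => f (x n)) p

/-- A set of operators is uniformly `p`-convergent if every weakly `p`-summable
sequence converges to `0` uniformly on the set. -/
def UnifPConvergent (p : ℝ≥0∞) (K : Set (X →L[ℝ] Y)) : Prop :=
  ∀ x : ℕ → X, WeaklyPSummable p x →
    ∀ ε > (0 : ℝ), ∃ N : ℕ, ∀ n ≥ N, ∀ T ∈ K, ‖T (x n)‖ < ε

/-- A `p`-convergent operator maps weakly `p`-summable sequences to norm-null sequences. -/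
def PConvergentOp (p : ℝ≥0∞) (T : X →L[ℝ] Y) : Prop :=
  ∀ x : ℕ → X, WeaklyPSummable p x → Tendsto (fun n => ‖T (x n)‖) atTop (𝓝 0)

/-- A sequence is weakly `p`-Cauchy if all differences along pairs of increasing
index sequences are weakly `p`-summable. -/
def WeaklyPCauchy (p : ℝ≥0∞) (x : ℕ → X) : Prop :=
  ∀ m k : ℕ → ℕ, StrictMono m → StrictMono k →
    WeaklyPSummable p (fun n => x (m n) - x (k n))

/-- A set is weakly `p`-precompact if every sequence in it has a weakly `p`-Cauchy
subsequence. -/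
def WeaklyPPrecompact (p : ℝ≥0∞) (A : Set X) : Prop :=
  ∀ x : ℕ → X, (∀ n, x n ∈ A) →
    ∃ s : ℕ → ℕ, StrictMono s ∧ WeaklyPCauchy p (fun n => x (s n))

/-- `B` is `U`-bounded: bounded and with positive distance to the boundary of `U`. -/
def UBounded (U B : Set X) : Prop :=
  IsBounded B ∧ B ⊆ U ∧ ∃ d > (0 : ℝ), ∀ x ∈ B, ball x d ⊆ U

/-- A set of operators is equicompact if every bounded sequence has a subsequence on
which the operators converge in norm, uniformly on the set. -/
def Equicompact (M : Set (X →L[ℝ] Y)) : Prop :=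
  ∀ x : ℕ → X, IsBounded (Set.range x) →
    ∃ s : ℕ → ℕ, StrictMono s ∧ ∃ g : (X →L[ℝ] Y) → Y,
      TendstoUniformlyOn (fun n T => T (x (s n))) g atTop M

/-- A set of operators is weakly equicompact if every bounded sequence has a
subsequence on which the operators converge weakly, uniformly on the set. -/
def WeaklyEquicompact (M : Set (X →L[ℝ] Y)) : Prop :=
  ∀ x : ℕ → X, IsBounded (Set.range x) →
    ∃ s : ℕ → ℕ, StrictMono s ∧ ∀ φ : Y →L[ℝ] ℝ, ∃ c : (X →L[ℝ] Y) → ℝ,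
      TendstoUniformlyOn (fun n T => φ (T (x (s n)))) c atTop M

/-- A weakly compact operator: the image of every bounded sequence has a weakly
convergent subsequence. -/
def WeaklyCompactOp (T : X →L[ℝ] Y) : Prop :=
  ∀ x : ℕ → X, IsBounded (Set.range x) →
    ∃ s : ℕ → ℕ, StrictMono s ∧ ∃ y : Y,
      ∀ φ : Y →L[ℝ] ℝ, Tendsto (fun n => φ (T (x (s n)))) atTop (𝓝 (φ y))

/-- A space has the `p`-Schur property if weakly `p`-summable sequences are norm null. -/
def PSchur (p : ℝ≥0∞) (W : Type*) [NormedAddCommGroup W] [NormedSpace ℝ W] : Prop :=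
  ∀ x : ℕ → W, WeaklyPSummable p x → Tendsto (fun n => ‖x n‖) atTop (𝓝 0)

/-- A set is relatively weakly `p`-compact if every sequence in it has a subsequence
weakly `p`-convergent to a point of the space. -/
def RelWeaklyPCompact (p : ℝ≥0∞) (A : Set X) : Prop :=
  ∀ x : ℕ → X, (∀ n, x n ∈ A) →
    ∃ s : ℕ → ℕ, StrictMono s ∧ ∃ a : X, WeaklyPSummable p (fun n => x (s n) - a)

/-- `f` is weakly `p`-sequentially continuous on `U` if it maps `U`-bounded weakly
`p`-Cauchy sequences to norm convergent sequences. -/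
def WeaklyPSeqContinuous (p : ℝ≥0∞) (U : Set X) (f : X → Y) : Prop :=
  ∀ x : ℕ → X, (∀ n, x n ∈ U) → UBounded U (Set.range x) → WeaklyPCauchy p x →
    ∃ y : Y, Tendsto (fun n => f (x n)) atTop (𝓝 y)

end Defs

/-!
Compact operators send weakly null sequences, in particular weakly `p`-summable ones, to norm null
sequences. Conversely, let `T` be `p`-convergent and `y₀ ≠ 0`. The rank-one operators
`x ↦ φ (T x) • y₀` with `‖φ‖ ≤ 1` form a uniformly `p`-convergent set of compact operators, so by
hypothesis it is equicompact. By Hahn–Banach this family norms `T` up to the factor `‖y₀‖`, hence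
uniform convergence on it along a subsequence of a bounded sequence `(xₙ)` makes `(T xₙ)` Cauchy
along that subsequence, and `T` is compact since `Y` is complete.
-/

theorem totallyBounded_of_forall_exists_cauchySeq_subseq {α : Type*} [UniformSpace α]
    {s : Set α}
    (h : ∀ u : ℕ → α, (∀ n, u n ∈ s) → ∃ φ : ℕ → ℕ, StrictMono φ ∧ CauchySeq (u ∘ φ)) :
    TotallyBounded s := by
  intro V hV
  by_contra! hV_cover
  -- no finite `V`-net exists, so a `V`-separated sequence in `s` can be built greedily
  obtain ⟨u, hu_mem, hu_sep⟩ : ∃ u : ℕ → α, (∀ n, u n ∈ s) ∧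
      ∀ n m, m < n → u m ∉ UniformSpace.ball (u n) V := by
    simp only [Set.not_subset, Set.mem_iUnion₂, not_exists, exists_prop] at hV_cover
    simpa only [forall_and, Set.forall_mem_image, not_and] using!
      Set.seq_of_forall_finite_exists hV_cover
  obtain ⟨φ, hφ, hu_cauchy⟩ := h u hu_mem
  obtain ⟨N, hN⟩ := hu_cauchy.mem_entourage hV
  exact hu_sep (φ (N + 1)) (φ N) (hφ N.lt_succ_self) (hN (N + 1) N N.le_succ le_rfl)

theorem Memℓp.tendsto_cofinite_zero {α : Type*} {E : α → Type*}
    [∀ i, NormedAddCommGroup (E i)] {p : ℝ≥0∞} {f : ∀ i, E i} (hf : Memℓp f p) (hp : p ≠ ⊤) :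
    Tendsto (fun i => ‖f i‖) cofinite (𝓝 0) := by
  have hq : 0 < (p + 1).toReal := ENNReal.toReal_pos (by simp) (by simpa using hp)
  have hpow := ((hf.of_exponent_ge le_self_add).summable hq).tendsto_cofinite_zero.rpow_const
    (p := (p + 1).toReal⁻¹) (Or.inr (by positivity))
  rw [Real.zero_rpow (by positivity)] at hpow
  exact hpow.congr fun i => Real.rpow_rpow_inv (norm_nonneg _) hq.ne'

section General

variable {𝕜 E F : Type*} [RCLike 𝕜] [NormedAddCommGroup E] [NormedSpace 𝕜 E]
  [NormedAddCommGroup F] [NormedSpace 𝕜 F]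

theorem isBounded_range_of_forall_dual_bddAbove {ι : Type*} {x : ι → E}
    (hx : ∀ f : StrongDual 𝕜 E, BddAbove (Set.range fun i => ‖f (x i)‖)) :
    IsBounded (Set.range x) := by
  obtain ⟨C, hC⟩ := banach_steinhaus (g := fun i => NormedSpace.inclusionInDoubleDualLi 𝕜 (x i))
    fun f => (hx f).imp fun C hC i => hC ⟨i, rfl⟩
  refine isBounded_iff_forall_norm_le.2 ⟨C, ?_⟩
  rintro _ ⟨i, rfl⟩
  simpa only [LinearIsometry.norm_map] using hC i

theorem IsCompactOperator.tendsto_zero_of_forall_dual_tendsto_zero {T : E →L[𝕜] F}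
    (hT : IsCompactOperator T) {x : ℕ → E}
    (hx : ∀ f : StrongDual 𝕜 E, Tendsto (fun n => f (x n)) atTop (𝓝 0)) :
    Tendsto (fun n => T (x n)) atTop (𝓝 0) := by
  have hx_bdd : IsBounded (Set.range x) := isBounded_range_of_forall_dual_bddAbove fun f =>
    (hx f).norm.bddAbove_range
  refine tendsto_of_subseq_tendsto fun ns hns => ?_
  have hK := IsCompactOperator.isCompact_closure_image_of_bounded (f := (T : E →ₗ[𝕜] F)) hT hx_bdd
  obtain ⟨y, -, ms, hms, hy⟩ := hK.tendsto_subseq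
    fun n => subset_closure (Set.mem_image_of_mem T (Set.mem_range_self (ns n)))
  have hy_zero : y = 0 := SeparatingDual.eq_zero_of_forall_dual_eq_zero fun φ =>
    tendsto_nhds_unique ((φ.continuous.tendsto y).comp hy)
      ((hx (φ.comp T)).comp (hns.comp hms.tendsto_atTop))
  exact ⟨ms, hy_zero ▸ hy⟩

theorem isCompactOperator_of_forall_exists_cauchySeq_subseq [CompleteSpace F] (T : E →L[𝕜] F)
    (H : ∀ x : ℕ → E, IsBounded (Set.range x) →
      ∃ s : ℕ → ℕ, StrictMono s ∧ CauchySeq (fun n => T (x (s n)))) :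
    IsCompactOperator T := by
  have h_tb : TotallyBounded (T '' ball 0 1) := by
    refine totallyBounded_of_forall_exists_cauchySeq_subseq fun y hy => ?_
    choose x hx_mem hxy using hy
    obtain ⟨s, hs, h_cauchy⟩ := H x (isBounded_ball.subset (Set.range_subset_iff.2 hx_mem))
    exact ⟨s, hs, by convert h_cauchy using 2 with n; exact (hxy (s n)).symm⟩
  exact (isCompactOperator_iff_isCompact_closure_image_ball (T : E →ₗ[𝕜] F) one_pos).2
    (h_tb.closure.isCompact_of_isClosed isClosed_closure)

theorem ContinuousLinearMap.isCompactOperator_smulRight (f : StrongDual 𝕜 E) (y : F) :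
    IsCompactOperator (f.smulRight y) :=
  (isCompactOperator_of_locallyCompactSpace_dom f).continuous_comp
    (continuous_id.smul continuous_const)

end General

section PConvergent

variable [NormedAddCommGroup X] [NormedSpace ℝ X] [NormedAddCommGroup Y] [NormedSpace ℝ Y]
  [NormedAddCommGroup Z] [NormedSpace ℝ Z]

theorem WeaklyPSummable.tendsto_dual {p : ℝ≥0∞} {x : ℕ → X} (hx : WeaklyPSummable p x)
    (f : X →L[ℝ] ℝ) : Tendsto (fun n => f (x n)) atTop (𝓝 0) := by
  unfold WeaklyPSummable at hx
  split_ifs at hx with hp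
  · exact hx f
  · rw [tendsto_zero_iff_norm_tendsto_zero, ← Nat.cofinite_eq_atTop]
    exact (hx f).tendsto_cofinite_zero hp

theorem IsCompactOperator.pConvergentOp {T : X →L[ℝ] Y} (hT : IsCompactOperator T)
    (p : ℝ≥0∞) : PConvergentOp p T := fun _ hx =>
  tendsto_zero_iff_norm_tendsto_zero.1
    (hT.tendsto_zero_of_forall_dual_tendsto_zero hx.tendsto_dual)

def dualSMulRight (T : X →L[ℝ] Z) (y₀ : Y) : Set (X →L[ℝ] Y) :=
  (fun φ : StrongDual ℝ Z => (φ.comp T).smulRight y₀) '' closedBall 0 1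

theorem norm_apply_le_of_mem_dualSMulRight {T : X →L[ℝ] Z} {y₀ : Y} {S : X →L[ℝ] Y}
    (hS : S ∈ dualSMulRight T y₀) (x : X) : ‖S x‖ ≤ ‖T x‖ * ‖y₀‖ := by
  obtain ⟨φ, hφ, rfl⟩ := hS
  rw [ContinuousLinearMap.smulRight_apply, norm_smul, ContinuousLinearMap.comp_apply]
  gcongr
  simpa using φ.le_of_opNorm_le (mem_closedBall_zero_iff.1 hφ) (T x)

theorem PConvergentOp.unifPConvergent_dualSMulRight {p : ℝ≥0∞} {T : X →L[ℝ] Z}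
    (hT : PConvergentOp p T) (y₀ : Y) : UnifPConvergent p (dualSMulRight T y₀) := by
  intro x hx ε hε
  have h_lim : Tendsto (fun n => ‖T (x n)‖ * ‖y₀‖) atTop (𝓝 0) := by
    simpa using (hT x hx).mul_const ‖y₀‖
  obtain ⟨N, hN⟩ := (h_lim.eventually (gt_mem_nhds hε)).exists_forall_of_atTop
  exact ⟨N, fun n hn S hS => (norm_apply_le_of_mem_dualSMulRight hS (x n)).trans_lt (hN n hn)⟩

theorem Equicompact.exists_cauchySeq_of_dualSMulRight {T : X →L[ℝ] Z} {y₀ : Y} (hy₀ : y₀ ≠ 0)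
    (hM : Equicompact (dualSMulRight T y₀)) {x : ℕ → X} (hx : IsBounded (Set.range x)) :
    ∃ s : ℕ → ℕ, StrictMono s ∧ CauchySeq (fun n => T (x (s n))) := by
  obtain ⟨s, hs, g, hg⟩ := hM x hx
  refine ⟨s, hs, Metric.cauchySeq_iff.2 fun ε hε => ?_⟩
  obtain ⟨N, hN⟩ := Metric.uniformCauchySeqOn_iff.1 hg.uniformCauchySeqOn (ε * ‖y₀‖)
    (by positivity)
  refine ⟨N, fun m hm n hn => ?_⟩
  obtain ⟨φ, hφ, hφ_norming⟩ := exists_dual_vector'' ℝ (T (x (s m)) - T (x (s n)))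
  have h_close := hN m hm n hn _ ⟨φ, mem_closedBall_zero_iff.2 hφ, rfl⟩
  rw [dist_eq_norm, ← map_sub, ContinuousLinearMap.smulRight_apply, norm_smul,
    ContinuousLinearMap.comp_apply, map_sub, hφ_norming, RCLike.norm_ofReal, abs_norm]
    at h_close
  rw [dist_eq_norm]
  exact lt_of_mul_lt_mul_right h_close (norm_nonneg y₀)

end PConvergent

theorem stmt14_general [NormedAddCommGroup X] [NormedSpace ℝ X]
    [NormedAddCommGroup Y] [NormedSpace ℝ Y] [CompleteSpace Y]
    (p : ℝ≥0∞)
    (h : ∀ M : Set (X →L[ℝ] Y), (∀ T ∈ M, IsCompactOperator T) →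
      UnifPConvergent p M → Equicompact M) :
    {T : X →L[ℝ] Y | PConvergentOp p T} = {T : X →L[ℝ] Y | IsCompactOperator T} := by
  ext T
  refine ⟨fun hT => ?_, fun hT => hT.pConvergentOp p⟩
  refine isCompactOperator_of_forall_exists_cauchySeq_subseq T fun x hx => ?_
  rcases subsingleton_or_nontrivial Y with _ | _
  · exact ⟨id, strictMono_id, by simpa only [Subsingleton.elim _ (0 : Y)] using cauchySeq_const 0⟩
  obtain ⟨y₀, hy₀⟩ := exists_ne (0 : Y)
  have h_equi := h (dualSMulRight T y₀)
    (fun S ⟨φ, _, hS⟩ => hS ▸ (φ.comp T).isCompactOperator_smulRight y₀)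
    (hT.unifPConvergent_dualSMulRight y₀)
  exact h_equi.exists_cauchySeq_of_dualSMulRight hy₀ hx

/-- If there is a Banach space `Y` such that every uniformly
`p`-convergent subset of `K(X,Y)` is equicompact, then `C_p(X,Y) = K(X,Y)`. -/
theorem stmt14 [NormedAddCommGroup X] [NormedSpace ℝ X] [CompleteSpace X]
    [NormedAddCommGroup Y] [NormedSpace ℝ Y] [CompleteSpace Y]
    (p : ℝ≥0∞) (hp : 1 ≤ p) (hp' : p ≠ ⊤)
    (h : ∀ M : Set (X →L[ℝ] Y), (∀ T ∈ M, IsCompactOperator T) →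
      UnifPConvergent p M → Equicompact M) :
    {T : X →L[ℝ] Y | PConvergentOp p T} = {T : X →L[ℝ] Y | IsCompactOperator T} :=
  stmt14_general p h
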